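/- The continuous-time Markov chain of the exclusion process is irreducible: for any two states x, y ∈ G there is a finite sequence of transitions with positive rate leading from x to y. In particular, every state can reach the empty state (0,...,0) and the empty state can reach every state. -/

import Mathlib

open Finset

/-- `y` arises from `x` by a type-`k` particle arriving at a vacant boundary
site (site `0` or site `N-1`). -/
def IsArrival (N K : ℕ) (x y : Fin N → Fin (K + 1)) (k : Fin (K + 1)) : Prop :=
  k ≠ 0 ∧ ∃ b : Fin N, ((b : ℕ) = 0 ∨ (b : ℕ) = N - 1) ∧ x b = 0 ∧
    y = Function.update x b k

/-- `y` arises from `x` by a type-`k` particle hopping from a site to an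
adjacent vacant site. -/
def IsHop (N K : ℕ) (x y : Fin N → Fin (K + 1)) (k : Fin (K + 1)) : Prop :=
  k ≠ 0 ∧ ∃ i j : Fin N, ((i : ℕ) + 1 = (j : ℕ) ∨ (j : ℕ) + 1 = (i : ℕ)) ∧
    x i = k ∧ x j = 0 ∧ y = x ∘ Equiv.swap i j

open scoped Classical in
/-- Off-diagonal transition rates of the exclusion process: `α_k` for a
type-`k` arrival at a vacant boundary site, `β_k` for a type-`k` departure
from a boundary site, `δ_k` for a type-`k` hop to an adjacent vacant site,
and `0` otherwise. -/
noncomputable def Qrate (N K : ℕ) (α β δ : Fin (K + 1) → ℝ)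
    (x y : Fin N → Fin (K + 1)) : ℝ :=
  ∑ k ∈ univ.filter (fun k : Fin (K + 1) => k ≠ 0),
    ((if IsArrival N K x y k then α k else 0) +
     (if IsArrival N K y x k then β k else 0) +
     (if IsHop N K x y k then δ k else 0))

lemma IsHop_symm {N K : ℕ} {x y : Fin N → Fin (K + 1)} {k : Fin (K + 1)}
    (h : IsHop N K x y k) : IsHop N K y x k := by
  obtain ⟨hk, i, j, hadj, hxi, hxj, rfl⟩ := h
  refine ⟨hk, j, i, hadj.symm, ?_, ?_, ?_⟩
  · simp [Equiv.swap_apply_right, hxi]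
  · simp [Equiv.swap_apply_left, hxj]
  · funext l
    simp [Function.comp, Equiv.swap_comm j i, Equiv.swap_apply_self]

lemma Qrate_pos (N K : ℕ) (α β δ : Fin (K + 1) → ℝ)
    (hα : ∀ k, k ≠ 0 → 0 < α k) (hβ : ∀ k, k ≠ 0 → 0 < β k)
    (hδ : ∀ k, k ≠ 0 → 0 < δ k) (x y : Fin N → Fin (K + 1)) (k : Fin (K + 1))
    (h : IsArrival N K x y k ∨ IsArrival N K y x k ∨ IsHop N K x y k) :
    0 < Qrate N K α β δ x y := by
  classical
  have hk : k ≠ 0 := by rcases h with h | h | h <;> exact h.1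
  unfold Qrate
  apply Finset.sum_pos'
  · intro j hj
    simp only [Finset.mem_filter] at hj
    have h1 : (0:ℝ) ≤ if IsArrival N K x y j then α j else 0 := by
      split_ifs; exacts [(hα j hj.2).le, le_refl 0]
    have h2 : (0:ℝ) ≤ if IsArrival N K y x j then β j else 0 := by
      split_ifs; exacts [(hβ j hj.2).le, le_refl 0]
    have h3 : (0:ℝ) ≤ if IsHop N K x y j then δ j else 0 := by
      split_ifs; exacts [(hδ j hj.2).le, le_refl 0]
    linarith
  · refine ⟨k, by simp [hk], ?_⟩
    have h1 : (0:ℝ) ≤ if IsArrival N K x y k then α k else 0 := by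
      split_ifs; exacts [(hα k hk).le, le_refl 0]
    have h2 : (0:ℝ) ≤ if IsArrival N K y x k then β k else 0 := by
      split_ifs; exacts [(hβ k hk).le, le_refl 0]
    have h3 : (0:ℝ) ≤ if IsHop N K x y k then δ k else 0 := by
      split_ifs; exacts [(hδ k hk).le, le_refl 0]
    rcases h with h | h | h
    · rw [if_pos h] at h1 ⊢; have := hα k hk; linarith
    · rw [if_pos h] at h2 ⊢; have := hβ k hk; linarith
    · rw [if_pos h] at h3 ⊢; have := hδ k hk; linarith

lemma Qrate_symm (N K : ℕ) (α β δ : Fin (K + 1) → ℝ)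
    (hα : ∀ k, k ≠ 0 → 0 < α k) (hβ : ∀ k, k ≠ 0 → 0 < β k)
    (hδ : ∀ k, k ≠ 0 → 0 < δ k) {x y : Fin N → Fin (K + 1)}
    (h : 0 < Qrate N K α β δ x y) : 0 < Qrate N K α β δ y x := by
  classical
  unfold Qrate at h
  obtain ⟨k, hkmem, hkpos⟩ : ∃ k ∈ Finset.univ.filter (fun k : Fin (K + 1) => k ≠ 0),
      0 < ((if IsArrival N K x y k then α k else 0) +
        (if IsArrival N K y x k then β k else 0) +
        (if IsHop N K x y k then δ k else 0)) := by
    by_contra hc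
    push_neg at hc
    have := Finset.sum_nonpos hc
    linarith
  by_cases hA : IsArrival N K x y k
  · exact Qrate_pos N K α β δ hα hβ hδ y x k (Or.inr (Or.inl hA))
  by_cases hB : IsArrival N K y x k
  · exact Qrate_pos N K α β δ hα hβ hδ y x k (Or.inl hB)
  by_cases hH : IsHop N K x y k
  · exact Qrate_pos N K α β δ hα hβ hδ y x k (Or.inr (Or.inr (IsHop_symm hH)))
  · simp [hA, hB, hH] at hkpos

lemma reach_zero (N K : ℕ) (α β δ : Fin (K + 1) → ℝ)
    (hα : ∀ k, k ≠ 0 → 0 < α k) (hβ : ∀ k, k ≠ 0 → 0 < β k)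
    (hδ : ∀ k, k ≠ 0 → 0 < δ k) (x : Fin N → Fin (K + 1)) :
    Relation.ReflTransGen (fun u v => 0 < Qrate N K α β δ u v) x (fun _ => 0) := by
  classical
  set R := fun u v => 0 < Qrate N K α β δ u v with hR
  suffices H : ∀ n (x : Fin N → Fin (K + 1)),
      (∑ i : Fin N, if x i = 0 then 0 else (i : ℕ) + 1) ≤ n →
      Relation.ReflTransGen R x (fun _ => 0) from H _ x le_rfl
  intro n
  induction n with
  | zero =>
    intro x hx
    have hx0 : x = fun _ => 0 := by
      funext i
      have := Finset.sum_eq_zero_iff.mp (Nat.le_zero.mp hx) i (Finset.mem_univ i)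
      by_contra hne
      rw [if_neg hne] at this
      omega
    rw [hx0]
  | succ n ih =>
    intro x hx
    by_cases hx0 : ∀ i, x i = 0
    · have : x = fun _ => 0 := funext hx0
      rw [this]
    · push_neg at hx0
      set s : Finset (Fin N) := Finset.univ.filter (fun i => x i ≠ 0) with hs
      have hsne : s.Nonempty := by
        obtain ⟨i, hi⟩ := hx0
        exact ⟨i, by simp [hs, hi]⟩
      set i : Fin N := s.min' hsne with hidef
      have hxi : x i ≠ 0 := by
        have := s.min'_mem hsne
        simp only [hs, Finset.mem_filter] at this
        exact this.2
      have hmin : ∀ l : Fin N, x l ≠ 0 → i ≤ l := by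
        intro l hl
        exact s.min'_le l (by simp [hs, hl])
      by_cases hi0 : (i : ℕ) = 0
      · -- departure from boundary site i (coords 0)
        set y : Fin N → Fin (K + 1) := Function.update x i 0 with hy
        have harr : IsArrival N K y x (x i) := by
          refine ⟨hxi, i, Or.inl hi0, ?_, ?_⟩
          · simp [hy]
          · funext l
            by_cases hl : l = i
            · subst hl; simp [hy]
            · simp [hy, Function.update_of_ne hl]
        have hstep : R x y :=
          Qrate_pos N K α β δ hα hβ hδ x y (x i) (Or.inr (Or.inl harr))
        have hlt : (∑ l : Fin N, if y l = 0 then 0 else (l : ℕ) + 1) <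
            (∑ l : Fin N, if x l = 0 then 0 else (l : ℕ) + 1) := by
          apply Finset.sum_lt_sum
          · intro l _
            by_cases hl : l = i
            · subst hl; simp [hy]
            · simp [hy, Function.update_of_ne hl]
          · refine ⟨i, Finset.mem_univ i, ?_⟩
            simp [hy, if_neg hxi]
        exact Relation.ReflTransGen.head hstep (ih y (by omega))
      · -- hop left from i to i-1
        have hiN : (i : ℕ) < N := i.isLt
        set j : Fin N := ⟨(i : ℕ) - 1, by omega⟩ with hj
        have hji : (j : ℕ) + 1 = (i : ℕ) := by simp [hj]; omega
        have hjlt : (j : ℕ) < (i : ℕ) := by omega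
        have hij : i ≠ j := by
          intro h
          rw [h] at hjlt
          exact lt_irrefl _ hjlt
        have hxj : x j = 0 := by
          by_contra hne
          have := hmin j hne
          rw [Fin.le_def] at this
          omega
        set y : Fin N → Fin (K + 1) := x ∘ Equiv.swap i j with hy
        have hhop : IsHop N K x y (x i) := ⟨hxi, i, j, Or.inr hji, rfl, hxj, rfl⟩
        have hstep : R x y :=
          Qrate_pos N K α β δ hα hβ hδ x y (x i) (Or.inr (Or.inr hhop))
        have hyi : y i = 0 := by simp [hy, Equiv.swap_apply_left, hxj]
        have hyj : y j ≠ 0 := by simp [hy, Equiv.swap_apply_right]; exact hxi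
        have hrest : ∀ l ∈ (Finset.univ.erase i).erase j, y l = x l := by
          intro l hl
          simp only [Finset.mem_erase] at hl
          simp [hy, Equiv.swap_apply_of_ne_of_ne hl.2.1 hl.1]
        have key : ∀ z : Fin N → Fin (K + 1),
            (∑ l : Fin N, if z l = 0 then 0 else (l : ℕ) + 1) =
            (if z i = 0 then 0 else (i : ℕ) + 1) +
            ((if z j = 0 then 0 else (j : ℕ) + 1) +
              ∑ l ∈ (Finset.univ.erase i).erase j,
                (if z l = 0 then 0 else (l : ℕ) + 1)) := by
          intro z
          rw [← Finset.add_sum_erase _ _ (Finset.mem_univ i),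
              ← Finset.add_sum_erase _ _ (Finset.mem_erase.mpr ⟨Ne.symm hij, Finset.mem_univ j⟩)]
        have hsum_eq : (∑ l ∈ (Finset.univ.erase i).erase j,
              (if y l = 0 then 0 else (l : ℕ) + 1)) =
            ∑ l ∈ (Finset.univ.erase i).erase j,
              (if x l = 0 then 0 else (l : ℕ) + 1) :=
          Finset.sum_congr rfl (fun l hl => by rw [hrest l hl])
        have hmy := key y
        have hmx := key x
        rw [if_pos hyi, if_neg hyj, hsum_eq] at hmy
        rw [if_neg hxi, if_pos hxj] at hmx
        have hlt : (∑ l : Fin N, if y l = 0 then 0 else (l : ℕ) + 1) <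
            (∑ l : Fin N, if x l = 0 then 0 else (l : ℕ) + 1) := by
          omega
        exact Relation.ReflTransGen.head hstep (ih y (by omega))

/-- The exclusion process is irreducible: any state can be reached from any
other state by a finite sequence of transitions of positive rate. In
particular every state reaches the empty state and conversely. -/
theorem irreducible (N K : ℕ) (hN : 2 ≤ N) (hK : 1 ≤ K)
    (α β δ : Fin (K + 1) → ℝ)
    (hα : ∀ k, k ≠ 0 → 0 < α k) (hβ : ∀ k, k ≠ 0 → 0 < β k)
    (hδ : ∀ k, k ≠ 0 → 0 < δ k) :
    (∀ x y : Fin N → Fin (K + 1),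
      Relation.ReflTransGen (fun u v => 0 < Qrate N K α β δ u v) x y) ∧
    (∀ x : Fin N → Fin (K + 1),
      Relation.ReflTransGen (fun u v => 0 < Qrate N K α β δ u v) x (fun _ => 0) ∧
      Relation.ReflTransGen (fun u v => 0 < Qrate N K α β δ u v) (fun _ => 0) x) := by
  have hsym : Symmetric (fun u v => 0 < Qrate N K α β δ u v) :=
    fun u v h => Qrate_symm N K α β δ hα hβ hδ h
  have hzero := reach_zero N K α β δ hα hβ hδ
  have hfrom : ∀ x : Fin N → Fin (K + 1),
      Relation.ReflTransGen (fun u v => 0 < Qrate N K α β δ u v) (fun _ => 0) x :=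
    fun x => (@Relation.ReflTransGen.symmetric _ _ ⟨hsym⟩).symm _ _ (hzero x)
  exact ⟨fun x y => (hzero x).trans (hfrom y), fun x => ⟨hzero x, hfrom x⟩⟩
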